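/- There exists a constant C > 0 such that for every even positive integer d: |(1/d) ∑_{j=1}^{d/2} 4^{−j} · (2j choose j) − √(2/(π d))| ≤ C/d. In other words, (1/d) ∑_{j=1}^{d/2} 2^{−2j} binom(2j, j) = √(2/(π d)) + O(1/d). -/

import Mathlib

/-!
Write `r n = (2n choose n) / 4 ^ n`. The recursion `(2n + 2) r (n+1) = (2n + 1) r n` telescopes
the sum to `(2n + 1) r n - 1`, so the mean is `r n + O(1/n)`. The same recursion shows that
`(2n + 1) (r n)²` is the reciprocal of the Wallis partial product `W n`, and Wallis' bounds on `W n`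
squeeze `(r n)²` between `2 / (π (2n + 1))` and `1 / (π n)`; hence `r n = 1 / √(π n) + O(1/n)`.
-/

open Matrix Kronecker BigOperators ComplexOrder

noncomputable def traceNorm {n : Type*} [Fintype n] [DecidableEq n] (A : Matrix n n ℂ) : ℝ :=
  (((Matrix.posSemidef_conjTranspose_mul_self A).1.eigenvectorUnitary : Matrix n n ℂ) *
    Matrix.diagonal (((↑) : ℝ → ℂ) ∘ (Real.sqrt ·) ∘ (Matrix.posSemidef_conjTranspose_mul_self A).1.eigenvalues) *
    (star ((Matrix.posSemidef_conjTranspose_mul_self A).1.eigenvectorUnitary : Matrix n n ℂ))).trace.re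

def IsDensity {n : Type*} [Fintype n] (ρ : Matrix n n ℂ) : Prop :=
  ρ.PosSemidef ∧ ρ.trace = 1

def tensorId {X Y Z : Type*} (Φ : Matrix X X ℂ → Matrix Y Y ℂ)
    (ρ : Matrix (X × Z) (X × Z) ℂ) : Matrix (Y × Z) (Y × Z) ℂ :=
  Matrix.of fun p q => Φ (Matrix.of fun x x' => ρ (x, p.2) (x', q.2)) p.1 q.1

noncomputable def ChoiMatrix {X Y : Type*} [Fintype X] [DecidableEq X] [Fintype Y]
    (Φ : Matrix X X ℂ → Matrix Y Y ℂ) : Matrix (Y × X) (Y × X) ℂ :=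
  ∑ j : X, ∑ k : X, (Φ (Matrix.single j k 1)) ⊗ₖ (Matrix.single j k 1)

def IsChannel {X Y : Type*} [Fintype X] [DecidableEq X] [Fintype Y]
    (Φ : Matrix X X ℂ →ₗ[ℂ] Matrix Y Y ℂ) : Prop :=
  (∀ M, (Φ M).trace = M.trace) ∧ (ChoiMatrix (⇑Φ)).PosSemidef

def SeparableOp {Y Z : Type*} [Fintype Y] [Fintype Z]
    (P : Matrix (Y × Z) (Y × Z) ℂ) : Prop :=
  ∃ (N : ℕ) (Q : Fin N → Matrix Y Y ℂ) (R : Fin N → Matrix Z Z ℂ),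
    (∀ i, (Q i).PosSemidef) ∧ (∀ i, (R i).PosSemidef) ∧ P = ∑ i, Q i ⊗ₖ R i

def partialTranspose {Y Z : Type*} (M : Matrix (Y × Z) (Y × Z) ℂ) :
    Matrix (Y × Z) (Y × Z) ℂ :=
  Matrix.of fun p q => M (p.1, q.2) (q.1, p.2)

def IsPPT {Y Z : Type*} [Fintype Y] [Fintype Z] (M : Matrix (Y × Z) (Y × Z) ℂ) : Prop :=
  M.PosSemidef ∧ (partialTranspose M).PosSemidef

open Real Finset

noncomputable def centralBinomRatio (n : ℕ) : ℝ := n.centralBinom / 4 ^ n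

lemma centralBinomRatio_nonneg (n : ℕ) : 0 ≤ centralBinomRatio n := by
  unfold centralBinomRatio; positivity

lemma centralBinomRatio_le_one (n : ℕ) : centralBinomRatio n ≤ 1 := by
  unfold centralBinomRatio
  rw [div_le_one (by positivity)]
  exact_mod_cast n.centralBinom_le_four_pow

lemma centralBinomRatio_zero : centralBinomRatio 0 = 1 := by
  simp [centralBinomRatio]

lemma centralBinomRatio_succ (n : ℕ) :
    (2 * n + 2) * centralBinomRatio (n + 1) = (2 * n + 1) * centralBinomRatio n := by
  have h : ((n + 1 : ℕ) : ℝ) * (n + 1).centralBinom = 2 * (2 * n + 1) * n.centralBinom := by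
    exact_mod_cast n.succ_mul_centralBinom_succ
  unfold centralBinomRatio
  rw [pow_succ]
  push_cast at h
  field_simp
  linear_combination 2 * h

lemma sum_Icc_centralBinomRatio (n : ℕ) :
    ∑ j ∈ Icc 1 n, centralBinomRatio j = (2 * n + 1) * centralBinomRatio n - 1 := by
  induction n with
  | zero => simp [centralBinomRatio_zero]
  | succ n ih =>
    rw [sum_Icc_succ_top (by omega), ih]
    push_cast
    linarith [centralBinomRatio_succ n]

lemma centralBinomRatio_sq_mul_wallis (n : ℕ) :
    (2 * n + 1) * centralBinomRatio n ^ 2 * Wallis.W n = 1 := by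
  induction n with
  | zero => simp [centralBinomRatio_zero, Wallis.W]
  | succ n ih =>
    rw [Wallis.W_succ]
    have h := centralBinomRatio_succ n
    push_cast
    field_simp
    linear_combination (2 * n + 3) * Wallis.W n *
        ((2 * n + 2) * centralBinomRatio (n + 1) + (2 * n + 1) * centralBinomRatio n) * h +
      (2 * n + 3) * (2 * n + 1) * ih

lemma pi_mul_centralBinomRatio_sq_le (n : ℕ) : π * n * centralBinomRatio n ^ 2 ≤ 1 := by
  have hW := Wallis.le_W n
  have hWallis := centralBinomRatio_sq_mul_wallis n
  rw [div_mul_eq_mul_div, div_le_iff₀ (by positivity)] at hW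
  have : π * (2 * n + 1) ^ 2 * centralBinomRatio n ^ 2 ≤ 4 * (n + 1) := by
    nlinarith [mul_le_mul_of_nonneg_left hW
      (by positivity : (0 : ℝ) ≤ (2 * n + 1) * centralBinomRatio n ^ 2)]
  nlinarith [mul_nonneg (mul_nonneg pi_pos.le (sq_nonneg (centralBinomRatio n)))
    (by positivity : (0 : ℝ) ≤ n + 1)]

lemma two_le_pi_mul_centralBinomRatio_sq (n : ℕ) :
    2 ≤ π * (2 * n + 1) * centralBinomRatio n ^ 2 := by
  have hW := Wallis.W_le n
  have hWallis := centralBinomRatio_sq_mul_wallis n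
  nlinarith [mul_le_mul_of_nonneg_left hW
    (by positivity : (0 : ℝ) ≤ (2 * n + 1) * centralBinomRatio n ^ 2)]

lemma abs_sub_le_of_mul_sq_le_sq {c s t : ℝ} (hc : 0 ≤ c) (hs : 0 ≤ s) (ht₀ : 0 ≤ t)
    (ht₁ : t ≤ 1) (hlow : t * s ^ 2 ≤ c ^ 2) (hupp : c ^ 2 ≤ s ^ 2) :
    |c - s| ≤ (1 - t) * s := by
  have hcs : c ≤ s := (pow_le_pow_iff_left₀ hc hs two_ne_zero).1 hupp
  have hts : t * s ≤ c := by
    refine (pow_le_pow_iff_left₀ (by positivity) hc two_ne_zero).1 ?_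
    nlinarith [mul_le_mul_of_nonneg_right ht₁ (mul_nonneg ht₀ (sq_nonneg s))]
  rw [abs_sub_comm, abs_of_nonneg (sub_nonneg.2 hcs)]
  linarith

lemma abs_centralBinomRatio_sub_le {n : ℕ} (hn : 1 ≤ n) :
    |centralBinomRatio n - √(1 / (π * n))| ≤ 1 / (2 * n + 1) := by
  have hn' : (1 : ℝ) ≤ n := by exact_mod_cast hn
  set s := √(1 / (π * n))
  have hs_sq : s ^ 2 = 1 / (π * n) := sq_sqrt (by positivity)
  have hs_le_one : s ≤ 1 := sqrt_le_one.2 <| (div_le_one (by positivity)).2 <| by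
    nlinarith [pi_gt_three]
  have hrn : |centralBinomRatio n - s| ≤ (1 - 2 * n / (2 * n + 1)) * s := by
    refine abs_sub_le_of_mul_sq_le_sq (centralBinomRatio_nonneg n) (sqrt_nonneg _)
      (by positivity) ((div_le_one (by positivity)).2 (by linarith)) ?_ ?_
    · rw [hs_sq]
      have := two_le_pi_mul_centralBinomRatio_sq n
      rw [div_mul_div_comm, div_le_iff₀ (by positivity)]
      nlinarith [pi_pos]
    · rw [hs_sq, le_div_iff₀ (by positivity)]
      linarith [pi_mul_centralBinomRatio_sq_le n]
  calc |centralBinomRatio n - s| ≤ (1 - 2 * n / (2 * n + 1)) * s := hrn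
    _ = s / (2 * n + 1) := by field_simp; ring
    _ ≤ 1 / (2 * n + 1) := by gcongr

lemma abs_mean_sum_Icc_centralBinomRatio_sub_le {n : ℕ} (hn : 1 ≤ n) :
    |1 / (2 * n) * ∑ j ∈ Icc 1 n, centralBinomRatio j - √(1 / (π * n))| ≤ 1 / n := by
  have hn' : (1 : ℝ) ≤ n := by exact_mod_cast hn
  have hsplit : 1 / (2 * n) * ∑ j ∈ Icc 1 n, centralBinomRatio j - √(1 / (π * n)) =
      (centralBinomRatio n - √(1 / (π * n))) + (centralBinomRatio n - 1) / (2 * n) := by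
    rw [sum_Icc_centralBinomRatio]
    field_simp
    ring
  have hmain : |centralBinomRatio n - √(1 / (π * n))| ≤ 1 / (2 * n) :=
    (abs_centralBinomRatio_sub_le hn).trans (by gcongr; linarith)
  have hrest : |(centralBinomRatio n - 1) / (2 * n)| ≤ 1 / (2 * n) := by
    rw [abs_div, abs_of_pos (by positivity : (0 : ℝ) < 2 * n), abs_sub_comm,
      abs_of_nonneg (sub_nonneg.2 (centralBinomRatio_le_one n))]
    gcongr
    linarith [centralBinomRatio_nonneg n]
  calc _ ≤ |centralBinomRatio n - √(1 / (π * n))| + |(centralBinomRatio n - 1) / (2 * n)| :=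
        hsplit ▸ abs_add_le _ _
    _ ≤ 1 / (2 * n) + 1 / (2 * n) := add_le_add hmain hrest
    _ = 1 / n := by field_simp; norm_num

/-- `(1/d) ∑_{j=1}^{d/2} 2^{-2j} (2j choose j) = √(2/(π d)) + O(1/d)`
for even positive integers `d`. -/
theorem central_binomial_sum_asymptotic :
    ∃ C : ℝ, 0 < C ∧ ∀ d : ℕ, 0 < d → Even d →
      |(1 / (d : ℝ)) * ∑ j ∈ Finset.Icc 1 (d / 2), ((Nat.choose (2 * j) j : ℝ) / 4 ^ j)
          - Real.sqrt (2 / (Real.pi * d))| ≤ C / d := by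
  refine ⟨2, two_pos, ?_⟩
  rintro d hd ⟨n, rfl⟩
  have hn : 1 ≤ n := by omega
  have hcast : ((n + n : ℕ) : ℝ) = 2 * n := by push_cast; ring
  rw [show (n + n) / 2 = n by omega, hcast, show 2 / (π * (2 * n)) = 1 / (π * n) by
    field_simp, show (2 : ℝ) / (2 * n) = 1 / n by field_simp]
  exact abs_mean_sum_Icc_centralBinomRatio_sub_le hn
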